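/- Let y = μ + Z ∈ ℝ^m with Z ~ P₀ zero-mean and symmetric, let T ∈ ℝ, and let Ĝ = {γ ∈ [m] : y_γ ≥ T} be the file-drawer selection. Define Ĝ⁺_ν = {γ ∈ [m] : y_γ ≥ T − 2 q^ν([m])}, where q^β(I) is the 1−β quantile of max_{i∈I}|Z_i|. Then for any 0 < ν < α < 1, P{μ_γ ∈ (y_γ ± q^{(α−ν)}(Ĝ⁺_ν)) for all γ ∈ Ĝ} ≥ 1 − α. -/

import Mathlib

/-!
Let `c = q^ν([m])` and let `G = {γ | μ_γ ≥ T - c}`, a set that does not depend on the noise.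
On the event `‖Z‖_∞ ≤ c`, every selected index lies in `G`, and `G` lies in the inflated
selection `Ĝ⁺_ν`; on the event `max_{γ ∈ G} |Z_γ| ≤ q^{α-ν}(G)`, every index of `G` is covered
with radius `q^{α-ν}(G) ≤ q^{α-ν}(Ĝ⁺_ν)`, by monotonicity of the quantile in the index set.
The two events fail with probability at most `ν` and `α - ν`, so a union bound gives `1 - α`.
-/

open MeasureTheory Set Filter Topology
open scoped ENNReal

section

variable {Ω : Type*} [MeasurableSpace Ω] (P : Measure Ω)

/-- The infimum defining a quantile is attained, since `t ↦ P (E t)` is right-continuous. -/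
theorem le_measure_csInf_of_monotone [IsFiniteMeasure P] {E : ℝ → Set Ω} (hE : Monotone E)
    (hmeas : ∀ t, MeasurableSet (E t)) (hcont : ∀ c, ⋂ t > c, E t = E c) {p : ℝ≥0∞}
    (hne : {t | p ≤ P (E t)}.Nonempty) :
    p ≤ P (E (sInf {t | p ≤ P (E t)})) := by
  set c := sInf {t | p ≤ P (E t)}
  have hlim : Tendsto (P ∘ E) (𝓝[>] c) (𝓝 (P (E c))) := by
    rw [← hcont c]
    exact tendsto_measure_biInter_gt (fun t _ => (hmeas t).nullMeasurableSet)
      (fun i j _ hij => hE hij) ⟨c + 1, by linarith, measure_ne_top _ _⟩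
  refine ge_of_tendsto hlim (eventually_nhdsWithin_of_forall fun t (ht : c < t) => ?_)
  obtain ⟨s, hs, hst⟩ := exists_lt_of_csInf_lt hne ht
  exact hs.trans (measure_mono (hE hst.le))

theorem nonempty_setOf_le_measure_of_iUnion_eq_univ {E : ℝ → Set Ω} (hE : Monotone E)
    (hunion : ⋃ n : ℕ, E n = univ) {p : ℝ≥0∞} (hp : p < P univ) :
    {t | p ≤ P (E t)}.Nonempty := by
  have hlim : Tendsto (fun n : ℕ => P (E n)) atTop (𝓝 (P univ)) := by
    rw [← hunion]
    exact tendsto_measure_iUnion_atTop (hE.comp Nat.mono_cast)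
  obtain ⟨n, hn⟩ := (hlim.eventually (eventually_ge_nhds hp)).exists
  exact ⟨n, hn⟩

theorem ofReal_one_sub_add_le_measure_inter [IsProbabilityMeasure P] {A B : Set Ω}
    (hBm : MeasurableSet B) {a b : ℝ} (hA : ENNReal.ofReal (1 - a) ≤ P A)
    (hB : ENNReal.ofReal (1 - b) ≤ P B) :
    ENNReal.ofReal (1 - (a + b)) ≤ P (A ∩ B) := by
  rw [ENNReal.ofReal_le_iff_le_toReal (measure_ne_top _ _)] at hA hB ⊢
  have hsum := measureReal_union_add_inter (μ := P) (s := A) hBm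
  have hunion : P.real (A ∪ B) ≤ 1 := measureReal_le_one
  simp only [measureReal_def] at hsum hunion
  linarith

end

section AbsBox

variable {ι : Type*}

/-- The acceptance region `{z | max_{i ∈ I} |z i| ≤ t}` of the paper. -/
def absBox (I : Set ι) (t : ℝ) : Set (ι → ℝ) := {z | ∀ i ∈ I, |z i| ≤ t}

theorem absBox_mono (I : Set ι) : Monotone (absBox I) :=
  fun _ _ hst _ hz i hi => (hz i hi).trans hst

theorem absBox_anti {I J : Set ι} (hIJ : I ⊆ J) (t : ℝ) : absBox J t ⊆ absBox I t :=
  fun _ hz i hi => hz i (hIJ hi)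

theorem biInter_gt_absBox (I : Set ι) (c : ℝ) : ⋂ t > c, absBox I t = absBox I c := by
  refine Subset.antisymm (fun z hz i hi => le_of_forall_gt_imp_ge_of_dense fun t ht => ?_)
    (subset_iInter₂ fun t ht => absBox_mono I (le_of_lt ht))
  exact (mem_iInter₂.1 hz t ht) i hi

theorem absBox_eq_empty_of_neg {I : Set ι} (hI : I.Nonempty) {t : ℝ} (ht : t < 0) :
    absBox I t = ∅ := by
  obtain ⟨i, hi⟩ := hI
  exact eq_empty_of_forall_notMem fun z hz => (abs_nonneg (z i)).not_gt ((hz i hi).trans_lt ht)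

theorem iUnion_absBox_natCast [Finite ι] (I : Set ι) : ⋃ n : ℕ, absBox I n = univ := by
  refine eq_univ_of_forall fun z => mem_iUnion.2 ?_
  obtain ⟨M, hM⟩ := Finite.exists_le fun i => |z i|
  obtain ⟨n, hn⟩ := exists_nat_ge M
  exact ⟨n, fun i _ => (hM i).trans hn⟩

theorem measurableSet_absBox [Countable ι] (I : Set ι) (t : ℝ) : MeasurableSet (absBox I t) := by
  simp only [absBox, ofPred_forall]
  exact .iInter fun i => .iInter fun _ =>
    measurableSet_le (measurable_pi_apply i).abs measurable_const

end AbsBox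

section MaxAbsQuantile

variable {ι : Type*} (P : Measure (ι → ℝ))

/-- The quantile `q^β(I)`: the `1 - β` quantile of `max_{i ∈ I} |Z i|` for `Z ~ P`. -/
noncomputable def maxAbsQuantile (β : ℝ) (I : Set ι) : ℝ :=
  sInf {t | ENNReal.ofReal (1 - β) ≤ P (absBox I t)}

variable [Finite ι] [IsProbabilityMeasure P]

theorem nonempty_setOf_le_measure_absBox {β : ℝ} (hβ : 0 < β) (I : Set ι) :
    {t | ENNReal.ofReal (1 - β) ≤ P (absBox I t)}.Nonempty :=
  nonempty_setOf_le_measure_of_iUnion_eq_univ P (absBox_mono I) (iUnion_absBox_natCast I)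
    (by rw [measure_univ]; exact ENNReal.ofReal_lt_one.2 (by linarith))

theorem ofReal_one_sub_le_measure_absBox_maxAbsQuantile {β : ℝ} (hβ : 0 < β) (I : Set ι) :
    ENNReal.ofReal (1 - β) ≤ P (absBox I (maxAbsQuantile P β I)) :=
  le_measure_csInf_of_monotone P (absBox_mono I) (measurableSet_absBox I) (biInter_gt_absBox I)
    (nonempty_setOf_le_measure_absBox P hβ I)

theorem maxAbsQuantile_mono {β : ℝ} (hβ₀ : 0 < β) (hβ₁ : β < 1) {I J : Set ι} (hIJ : I ⊆ J)
    (hI : I.Nonempty) : maxAbsQuantile P β I ≤ maxAbsQuantile P β J := by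
  refine csInf_le_csInf ⟨0, fun t ht => not_lt.1 fun htneg => ?_⟩
    (nonempty_setOf_le_measure_absBox P hβ₀ J)
    fun t ht => ht.trans (measure_mono (absBox_anti hIJ t))
  have : ENNReal.ofReal (1 - β) ≤ 0 := by
    simpa [absBox_eq_empty_of_neg hI htneg] using ht
  exact (ENNReal.ofReal_pos.2 (by linarith)).not_ge this

end MaxAbsQuantile

theorem absBox_inter_subset_fileDrawer_coverage {ι : Type*} [Finite ι]
    (P : Measure (ι → ℝ)) [IsProbabilityMeasure P] (μ : ι → ℝ) (T c : ℝ) {β : ℝ}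
    (hβ₀ : 0 < β) (hβ₁ : β < 1) :
    absBox univ c ∩ absBox {γ | T - c ≤ μ γ} (maxAbsQuantile P β {γ | T - c ≤ μ γ}) ⊆
      {z | ∀ γ, T ≤ (μ + z) γ →
        |(μ + z) γ - μ γ| ≤ maxAbsQuantile P β {γ' | T - 2 * c ≤ (μ + z) γ'}} := by
  rintro z ⟨hzc, hzG⟩ γ hγ
  have hz : ∀ i, |z i| ≤ c := fun i => hzc i (mem_univ i)
  have hγG : T - c ≤ μ γ := by
    have := (abs_le.1 (hz γ)).2
    simp only [Pi.add_apply] at hγ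
    linarith
  have hG : {γ | T - c ≤ μ γ} ⊆ {γ' | T - 2 * c ≤ (μ + z) γ'} := by
    intro γ' (hγ' : T - c ≤ μ γ')
    have := (abs_le.1 (hz γ')).1
    simp only [mem_ofPred_eq, Pi.add_apply]
    linarith
  rw [Pi.add_apply, add_sub_cancel_left]
  exact (hzG γ hγG).trans (maxAbsQuantile_mono P hβ₀ hβ₁ hG ⟨γ, hγG⟩)

theorem file_drawer_locally_simultaneous_general
    {m : ℕ}
    (P0 : Measure (Fin m → ℝ)) [IsProbabilityMeasure P0]
    (q : ℝ → Set (Fin m) → ℝ)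
    (hq : ∀ β I, q β I =
      sInf {t : ℝ | ENNReal.ofReal (1 - β) ≤ P0 {z | ∀ i ∈ I, |z i| ≤ t}})
    (T : ℝ)
    (μ : Fin m → ℝ) (α ν : ℝ) (hν : 0 < ν) (hνα : ν < α) (hα : α < 1) :
    ENNReal.ofReal (1 - α) ≤
      P0 {z | ∀ γ : Fin m, T ≤ (μ + z) γ →
        |(μ + z) γ - μ γ| ≤ q (α - ν) {γ' | T - 2 * q ν Set.univ ≤ (μ + z) γ'}} := by
  obtain rfl : q = maxAbsQuantile P0 := funext₂ hq
  have hαν : 0 < α - ν := sub_pos.2 hνα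
  refine le_trans ?_ (measure_mono (absBox_inter_subset_fileDrawer_coverage P0 μ T
    (maxAbsQuantile P0 ν univ) hαν (by linarith)))
  calc ENNReal.ofReal (1 - α) = ENNReal.ofReal (1 - (ν + (α - ν))) := by rw [add_sub_cancel]
    _ ≤ _ := ofReal_one_sub_add_le_measure_inter P0 (measurableSet_absBox _ _)
      (ofReal_one_sub_le_measure_absBox_maxAbsQuantile P0 hν univ)
      (ofReal_one_sub_le_measure_absBox_maxAbsQuantile P0 hαν _)

/-- Locally simultaneous inference for the file-drawer problem, parametric location family. -/
theorem file_drawer_locally_simultaneous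
    {m : ℕ} (hm : 0 < m)
    (P0 : Measure (Fin m → ℝ)) [IsProbabilityMeasure P0]
    (hmean : ∀ i, ∫ z, z i ∂P0 = 0)
    (hsym : P0.map (fun z i => -(z i)) = P0)
    (q : ℝ → Set (Fin m) → ℝ)
    (hq : ∀ β I, q β I =
      sInf {t : ℝ | ENNReal.ofReal (1 - β) ≤ P0 {z | ∀ i ∈ I, |z i| ≤ t}})
    (T : ℝ)
    (μ : Fin m → ℝ) (α ν : ℝ) (hν : 0 < ν) (hνα : ν < α) (hα : α < 1) :
    ENNReal.ofReal (1 - α) ≤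
      P0 {z | ∀ γ : Fin m, T ≤ (μ + z) γ →
        |(μ + z) γ - μ γ| ≤ q (α - ν) {γ' | T - 2 * q ν Set.univ ≤ (μ + z) γ'}} :=
  file_drawer_locally_simultaneous_general P0 q hq T μ α ν hν hνα hα
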